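/- Let F be a strictly 1-balanced graph on r ≥ 3 vertices, let P be a clean F-path with F-edges h_1,…,h_ℓ, and let S be a connected subgraph of the shadow graph of P with at least 2 vertices that contains all overlap vertices of P and satisfies v(S ∩ h_i) ≥ 2 for all i, where S ∩ h_i is the graph with vertex set V(S) ∩ V(h_i) and edge set E(S) ∩ E(h_i). Then d_1(S) = Σ_i e(S ∩ h_i)/(v(S)−1) ≤ d_1(F), and consequently e(S)/v(S) < d_1(F). -/

import Mathlib

open scoped Classical
open Filter Asymptotics

noncomputable section

/-! ### Basic graph quantities -/

/-- The number of edges of a simple graph. -/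
def edgeCnt {V : Type*} (G : SimpleGraph V) : ℕ := G.edgeSet.ncard

/-- The 1-density `e(F)/(v(F)-1)` of a graph `F` on `r` vertices. -/
def d1 {r : ℕ} (F : SimpleGraph (Fin r)) : ℝ := (edgeCnt F : ℝ) / ((r : ℝ) - 1)

/-- `F` is strictly 1-balanced: every proper subgraph `S` with at least 2 vertices and at
least one edge satisfies `d₁(S) < d₁(F)`. -/
def Strictly1Balanced {r : ℕ} (F : SimpleGraph (Fin r)) : Prop :=
  ∀ S : F.Subgraph, S ≠ ⊤ → 2 ≤ S.verts.ncard → 1 ≤ S.edgeSet.ncard →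
    (S.edgeSet.ncard : ℝ) / ((S.verts.ncard : ℝ) - 1) < d1 F

/-- The number of automorphisms of `F`. -/
def autCard {r : ℕ} (F : SimpleGraph (Fin r)) : ℕ := Nat.card (F ≃g F)

/-! ### Copies of `F` in a graph, `F`-factors, `F`-isolated vertices -/

/-- `φ` is a copy of `F` in `G` (an embedding of `F` as a not necessarily induced subgraph). -/
def IsCopyIn {r n : ℕ} (F : SimpleGraph (Fin r)) (G : SimpleGraph (Fin n))
    (φ : Fin r ↪ Fin n) : Prop :=
  ∀ u v, F.Adj u v → G.Adj (φ u) (φ v)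

/-- `G` contains an `F`-factor: pairwise vertex-disjoint copies of `F` covering all vertices. -/
def HasFFactor {r n : ℕ} (F : SimpleGraph (Fin r)) (G : SimpleGraph (Fin n)) : Prop :=
  ∃ Φ : Finset (Fin r ↪ Fin n),
    (∀ φ ∈ Φ, IsCopyIn F G φ) ∧
    (∀ φ ∈ Φ, ∀ ψ ∈ Φ, φ ≠ ψ → ∀ x : Fin n, ¬(x ∈ Set.range φ ∧ x ∈ Set.range ψ)) ∧
    (∀ x : Fin n, ∃ φ ∈ Φ, x ∈ Set.range φ)

/-- Vertex `x` is `F`-isolated in `G`: no copy of `F` in `G` contains `x`. -/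
def FIsolated {r n : ℕ} (F : SimpleGraph (Fin r)) (G : SimpleGraph (Fin n)) (x : Fin n) : Prop :=
  ∀ φ : Fin r ↪ Fin n, IsCopyIn F G φ → x ∉ Set.range φ

/-! ### The random graph `G(n,p)` -/

/-- Probability of the event `P` in the Erdős–Rényi random graph `G(n,p)`. -/
def gnpProb (n : ℕ) (p : ℝ) (P : SimpleGraph (Fin n) → Prop) : ℝ :=
  ∑ G : SimpleGraph (Fin n),
    if P G then p ^ edgeCnt G * (1 - p) ^ (n.choose 2 - edgeCnt G) else 0

/-- The sharp threshold `p* = ((aut F / r!) · ln n / C(n-1, r-1))^(1/e(F))`. -/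
def pstar {r : ℕ} (F : SimpleGraph (Fin r)) (n : ℕ) : ℝ :=
  ((autCard F : ℝ) / (r.factorial : ℝ) * Real.log n / ((n - 1).choose (r - 1) : ℝ)) ^
    ((1 : ℝ) / (edgeCnt F : ℝ))

/-! ### `F`-edges and `F`-graphs -/

/-- An `F`-edge: a pair (vertex set, edge set); the copies of `F` among these are singled out
by `FEdge.IsCopyOf`. -/
abbrev FEdge (V : Type*) := Finset V × Finset (Sym2 V)

/-- `h` is a copy of `F` with vertices in `V`. -/
def FEdge.IsCopyOf {r : ℕ} {V : Type*} (h : FEdge V) (F : SimpleGraph (Fin r)) : Prop :=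
  ∃ φ : Fin r → V, Function.Injective φ ∧ (↑h.1 : Set V) = Set.range φ ∧
    (↑h.2 : Set (Sym2 V)) = Sym2.map φ '' F.edgeSet

/-- An `F`-graph: a vertex set together with a set of `F`-edges. -/
abbrev FGraph (V : Type*) := Finset V × Finset (FEdge V)

/-- Well-formedness of an `F`-graph w.r.t. `F`: every `F`-edge is a copy of `F` with
vertices inside the vertex set. -/
def FGraph.Wf {r : ℕ} {V : Type*} (H : FGraph V) (F : SimpleGraph (Fin r)) : Prop :=
  ∀ h ∈ H.2, FEdge.IsCopyOf h F ∧ h.1 ⊆ H.1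

/-- The edge set of the shadow graph of an `F`-graph. -/
def shadowEdges {V : Type*} [DecidableEq V] (H : FGraph V) : Finset (Sym2 V) :=
  H.2.sup Prod.snd

/-- The shadow graph of an `F`-graph. -/
def shadow {V : Type*} [DecidableEq V] (H : FGraph V) : SimpleGraph V :=
  SimpleGraph.fromEdgeSet ↑(shadowEdges H)

/-- Number of connected components of the shadow graph of `H` (on the vertex set of `H`). -/
def compCount {V : Type*} [DecidableEq V] (H : FGraph V) : ℕ :=
  Nat.card ((shadow H).induce (↑H.1 : Set V)).ConnectedComponent

/-- An `F`-graph is connected if its shadow graph is. -/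
def FGraphConnected {V : Type*} [DecidableEq V] (H : FGraph V) : Prop :=
  ((shadow H).induce (↑H.1 : Set V)).Connected

/-- The nullity `n(H) = (r-1)e(H) + c(H) - v(H)` of an `F`-graph. -/
def nullity (r : ℕ) {V : Type*} [DecidableEq V] (H : FGraph V) : ℤ :=
  ((r : ℤ) - 1) * H.2.card + compCount H - H.1.card

/-- An avoidable configuration: a connected `F`-graph of nullity at least 2. -/
def Avoidable {r : ℕ} {V : Type*} [DecidableEq V] (F : SimpleGraph (Fin r))
    (H : FGraph V) : Prop :=
  FGraph.Wf H F ∧ FGraphConnected H ∧ 2 ≤ nullity r H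

/-- The `F`-edge `h` is induced by the `F`-graph `H`: it is a copy of `F`, not an `F`-edge of
`H`, but all its edges lie in the shadow graph of `H`. -/
def InducedBy {r : ℕ} {V : Type*} [DecidableEq V] (F : SimpleGraph (Fin r)) (h : FEdge V)
    (H : FGraph V) : Prop :=
  FEdge.IsCopyOf h F ∧ h ∉ H.2 ∧ h.2 ⊆ shadowEdges H

/-- `C` is a clean `F`-cycle of length `k`. -/
def IsCleanCycleOfLen {r : ℕ} {V : Type*} [DecidableEq V] (F : SimpleGraph (Fin r))
    (C : FGraph V) (k : ℕ) : Prop :=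
  FGraph.Wf C F ∧ C.1 = C.2.sup Prod.fst ∧
  ((k = 2 ∧ ∃ h₁ h₂ : FEdge V, h₁ ≠ h₂ ∧ C.2 = {h₁, h₂} ∧ (h₁.1 ∩ h₂.1).card = 2) ∨
   (3 ≤ k ∧ ∃ h : Fin k → FEdge V, Function.Injective h ∧ C.2 = Finset.image h Finset.univ ∧
     ∃ v : Fin k → V, Function.Injective v ∧
       (∀ i j : Fin k, ((i : ℕ) + 1) % k = (j : ℕ) → (h i).1 ∩ (h j).1 = {v i}) ∧
       (∀ i j : Fin k, i ≠ j → ((i : ℕ) + 1) % k ≠ (j : ℕ) → ((j : ℕ) + 1) % k ≠ (i : ℕ) →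
         (h i).1 ∩ (h j).1 = ∅)))

/-- `C` is a clean `F`-cycle (of some length `k ≥ 2`). -/
def IsCleanCycle {r : ℕ} {V : Type*} [DecidableEq V] (F : SimpleGraph (Fin r))
    (C : FGraph V) : Prop :=
  ∃ k, IsCleanCycleOfLen F C k

/-- `C` is a sparse clean `F`-cycle: a clean `F`-cycle of length 2 whose two overlap vertices
form an edge of both of its `F`-edges. -/
def IsSparse {r : ℕ} {V : Type*} [DecidableEq V] (F : SimpleGraph (Fin r))
    (C : FGraph V) : Prop :=
  IsCleanCycleOfLen F C 2 ∧ ∃ h₁ h₂ : FEdge V, h₁ ≠ h₂ ∧ C.2 = {h₁, h₂} ∧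
    ∃ x y : V, x ≠ y ∧ h₁.1 ∩ h₂.1 = {x, y} ∧ s(x, y) ∈ h₁.2 ∧ s(x, y) ∈ h₂.2

/-! ### The random `F`-graph `H_F(n,π)` -/

/-- All potential `F`-edges on the vertex set `Fin n`. -/
def allFEdges (r n : ℕ) (F : SimpleGraph (Fin r)) : Finset (FEdge (Fin n)) :=
  Finset.univ.filter fun h => FEdge.IsCopyOf h F

/-- Expectation of `X` under the random `F`-graph `H_F(n,π)`, whose `F`-edge set is a random
subset of `allFEdges r n F`, each `F`-edge present independently with probability `π`. -/
def hfExp (r n : ℕ) (F : SimpleGraph (Fin r)) (π : ℝ)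
    (X : Finset (FEdge (Fin n)) → ℝ) : ℝ :=
  ∑ S ∈ (allFEdges r n F).powerset,
    π ^ S.card * (1 - π) ^ ((allFEdges r n F).card - S.card) * X S

/-- Probability of `P` under the random `F`-graph `H_F(n,π)`. -/
def hfProb (r n : ℕ) (F : SimpleGraph (Fin r)) (π : ℝ)
    (P : Finset (FEdge (Fin n)) → Prop) : ℝ :=
  hfExp r n F π fun S => if P S then 1 else 0

/-! ### Maps, isomorphisms and copies of `F`-graphs -/

/-- Image of an `F`-edge under a vertex map. -/
def FEdge.map {V W : Type*} [DecidableEq W] (ψ : V → W) (h : FEdge V) : FEdge W :=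
  (h.1.image ψ, h.2.image (Sym2.map ψ))

/-- Image of an `F`-graph under a vertex map. -/
def FGraph.map {V W : Type*} [DecidableEq V] [DecidableEq W] (ψ : V → W)
    (H : FGraph V) : FGraph W :=
  (H.1.image ψ, H.2.image (FEdge.map ψ))

/-- `H` is isomorphic to `K` via a vertex bijection mapping `F`-edges to `F`-edges. -/
def FGraph.IsoTo {V W : Type*} [DecidableEq V] [DecidableEq W] (H : FGraph V)
    (K : FGraph W) : Prop :=
  ∃ ψ : V → W, Set.InjOn ψ ↑H.1 ∧ FGraph.map ψ H = K

/-- The number of copies of the `F`-graph `H` among a set `S` of `F`-edges on `Fin n`. -/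
def copyCount {V : Type*} [DecidableEq V] (H : FGraph V) {n : ℕ}
    (S : Finset (FEdge (Fin n))) : ℕ :=
  Nat.card {K : FGraph (Fin n) // K.2 ⊆ S ∧ FGraph.IsoTo H K}

/-- Union of two `F`-graphs. -/
def FGraph.union {V : Type*} [DecidableEq V] (H K : FGraph V) : FGraph V :=
  (H.1 ∪ K.1, H.2 ∪ K.2)

/-! ### d-graphs and the random d-graph `G*(n,p)` -/

/-- A d-graph: vertices, usual edges, and dummy edges (identified with sparse clean
`F`-cycles). -/
abbrev DGraph (V : Type*) := Finset V × Finset (Sym2 V) × Finset (FGraph V)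

/-- All potential usual edges on `Fin n`. -/
def allUsual (n : ℕ) : Finset (Sym2 (Fin n)) := Finset.univ.filter fun e => ¬e.IsDiag

/-- All potential dummy edges on `Fin n`: the sparse clean `F`-cycles. -/
def allDummies (r n : ℕ) (F : SimpleGraph (Fin r)) : Finset (FGraph (Fin n)) :=
  Finset.univ.filter fun C => IsSparse F C

/-- Expectation of `X` under the random d-graph `G*(n,p)`: each usual edge and each dummy
edge is included independently with probability `p`. -/
def dgExp (r n : ℕ) (F : SimpleGraph (Fin r)) (p : ℝ)
    (X : Finset (Sym2 (Fin n)) → Finset (FGraph (Fin n)) → ℝ) : ℝ :=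
  ∑ U ∈ (allUsual n).powerset, ∑ D ∈ (allDummies r n F).powerset,
    p ^ (U.card + D.card) *
      (1 - p) ^ (((allUsual n).card - U.card) + ((allDummies r n F).card - D.card)) * X U D

/-- Probability of `P` under the random d-graph `G*(n,p)`. -/
def dgProb (r n : ℕ) (F : SimpleGraph (Fin r)) (p : ℝ)
    (P : Finset (Sym2 (Fin n)) → Finset (FGraph (Fin n)) → Prop) : ℝ :=
  dgExp r n F p fun U D => if P U D then 1 else 0

/-- Image of a d-graph under a vertex map. -/
def DGraph.map {V W : Type*} [DecidableEq V] [DecidableEq W] (ψ : V → W)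
    (K : DGraph V) : DGraph W :=
  (K.1.image ψ, K.2.1.image (Sym2.map ψ), K.2.2.image (FGraph.map ψ))

/-- `K` is isomorphic to `L` as a d-graph. -/
def DGraph.IsoTo {V W : Type*} [DecidableEq V] [DecidableEq W] (K : DGraph V)
    (L : DGraph W) : Prop :=
  ∃ ψ : V → W, Set.InjOn ψ ↑K.1 ∧ DGraph.map ψ K = L

/-- The number of copies of the d-graph `K` inside the d-graph on `Fin n` with usual edges
`U` and dummy edges `D`. -/
def dCopyCount {V : Type*} [DecidableEq V] (K : DGraph V) {n : ℕ}
    (U : Finset (Sym2 (Fin n))) (D : Finset (FGraph (Fin n))) : ℕ :=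
  Nat.card {L : DGraph (Fin n) // L.2.1 ⊆ U ∧ L.2.2 ⊆ D ∧ DGraph.IsoTo K L}

/-- Union of two d-graphs. -/
def DGraph.union {V : Type*} [DecidableEq V] (K L : DGraph V) : DGraph V :=
  (K.1 ∪ L.1, K.2.1 ∪ L.2.1, K.2.2 ∪ L.2.2)

/-- `G` is the clean d-cycle corresponding to the clean `F`-cycle `C`: the shadow graph of
`C` if `C` is dense, together with the dummy edge `C` if `C` is sparse. -/
def IsCleanDCycleOf {r : ℕ} {V : Type*} [DecidableEq V] (F : SimpleGraph (Fin r))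
    (G : DGraph V) (C : FGraph V) : Prop :=
  (IsCleanCycle F C ∧ ¬IsSparse F C ∧ G = (C.1, shadowEdges C, (∅ : Finset (FGraph V)))) ∨
  (IsSparse F C ∧ G = (C.1, shadowEdges C, ({C} : Finset (FGraph V))))


/-!
Two `F`-edges of a clean path share at most one vertex, so they share no edge and
`e(S) = Σᵢ e(S ∩ hᵢ)`. Each `S ∩ hᵢ` pulls back to a subgraph of `F` with at least two
vertices, so strict 1-balancedness gives `e(S ∩ hᵢ) ≤ d₁(F) (v(S ∩ hᵢ) - 1)`. As `S` contains
the `ℓ - 1` overlap vertices, the pieces `V(S) ∩ V(hᵢ)` form a chain in which consecutive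
pieces meet in exactly one vertex, whence `Σᵢ (v(S ∩ hᵢ) - 1) = v(S) - 1`. Finally `S` is
connected with two vertices, so `e(S) > 0` and `e(S)/v(S) < e(S)/(v(S) - 1)`.
-/

open Finset

namespace FEdge.IsCopyOf

variable {r : ℕ} {F : SimpleGraph (Fin r)} {V : Type*} {h : FEdge V}

theorem mem_verts_of_mem_edge (hc : h.IsCopyOf F) {e : Sym2 V} (he : e ∈ h.2) {x : V}
    (hx : x ∈ e) : x ∈ h.1 := by
  obtain ⟨φ, -, hverts, hedges⟩ := hc
  obtain ⟨e, -, rfl⟩ := (Set.ext_iff.mp hedges _).mp he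
  obtain ⟨u, -, rfl⟩ := Sym2.mem_map.mp hx
  exact (Set.ext_iff.mp hverts _).mpr ⟨u, rfl⟩

theorem not_isDiag_of_mem_edge (hc : h.IsCopyOf F) {e : Sym2 V} (he : e ∈ h.2) :
    ¬e.IsDiag := by
  obtain ⟨φ, hφ, -, hedges⟩ := hc
  obtain ⟨a, ha, rfl⟩ := (Set.ext_iff.mp hedges _).mp he
  rw [Sym2.isDiag_map hφ]
  exact F.not_isDiag_of_mem_edgeSet ha

theorem disjoint_edges [DecidableEq V] {h' : FEdge V} (hc : h.IsCopyOf F)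
    (hc' : h'.IsCopyOf F) (hcard : #(h.1 ∩ h'.1) ≤ 1) : Disjoint h.2 h'.2 := by
  refine disjoint_left.mpr fun e he he' => ?_
  rcases e with ⟨x, y⟩
  have hmem : ∀ z ∈ s(x, y), z ∈ h.1 ∩ h'.1 := fun z hz =>
    mem_inter.mpr ⟨hc.mem_verts_of_mem_edge he hz, hc'.mem_verts_of_mem_edge he' hz⟩
  exact hc.not_isDiag_of_mem_edge he <|
    card_le_one.mp hcard x (hmem x (Sym2.mem_mk_left x y)) y (hmem y (Sym2.mem_mk_right x y))

end FEdge.IsCopyOf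

theorem Finset.card_biUnion_add_eq_sum_card_of_chain {V : Type*} [DecidableEq V] :
    ∀ {n : ℕ} (A : Fin (n + 1) → Finset V),
      (∀ i j : Fin (n + 1), (i : ℕ) + 1 = j → #(A i ∩ A j) = 1) →
      (∀ i j : Fin (n + 1), (i : ℕ) + 2 ≤ j → Disjoint (A i) (A j)) →
      #(univ.biUnion A) + n = ∑ i, #(A i)
  | 0, A, _, _ => by simp
  | n + 1, A, hconsec, hfar => by
    have hinit := card_biUnion_add_eq_sum_card_of_chain (fun i : Fin (n + 1) => A i.castSucc)
      (fun i j hij => hconsec _ _ hij) (fun i j hij => hfar _ _ hij)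
    have hsplit :
        univ.biUnion A = univ.biUnion (fun i : Fin (n + 1) => A i.castSucc) ∪ A (Fin.last _) := by
      ext x
      simp [Fin.exists_fin_succ']
    have hinter : univ.biUnion (fun i : Fin (n + 1) => A i.castSucc) ∩ A (Fin.last _) =
        A (Fin.castSucc (Fin.last n)) ∩ A (Fin.last _) := by
      ext x
      simp only [mem_inter, mem_biUnion, mem_univ, true_and]
      refine ⟨fun ⟨⟨i, hi⟩, hl⟩ => ⟨?_, hl⟩, fun ⟨hn, hl⟩ => ⟨⟨_, hn⟩, hl⟩⟩
      obtain rfl | hlt := (Fin.le_last i).eq_or_lt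
      · exact hi
      · have hdisj := hfar i.castSucc (Fin.last _) (by simp [Fin.lt_def] at hlt ⊢; omega)
        exact (disjoint_left.mp hdisj hi hl).elim
    have hunion := card_union_add_card_inter
      (univ.biUnion fun i : Fin (n + 1) => A i.castSucc) (A (Fin.last _))
    rw [hinter, hconsec _ _ (by simp)] at hunion
    rw [hsplit, Fin.sum_univ_castSucc]
    omega

theorem Strictly1Balanced.card_edgeSet_le {r : ℕ} {F : SimpleGraph (Fin r)}
    (hF : Strictly1Balanced F) (S : F.Subgraph) (hS : 2 ≤ S.verts.ncard) :
    (S.edgeSet.ncard : ℝ) ≤ d1 F * ((S.verts.ncard : ℝ) - 1) := by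
  have hr : (2 : ℝ) ≤ r := by
    have := (Set.ncard_le_ncard (Set.subset_univ S.verts)).trans_eq (Set.ncard_univ (Fin r))
    exact_mod_cast hS.trans (by simpa using this)
  have hS' : (2 : ℝ) ≤ S.verts.ncard := by exact_mod_cast hS
  obtain hempty | hpos := Nat.eq_zero_or_pos S.edgeSet.ncard
  · rw [hempty, Nat.cast_zero]
    exact mul_nonneg (div_nonneg (Nat.cast_nonneg _) (by linarith)) (by linarith)
  by_cases htop : S = ⊤
  · subst htop
    have hverts : (⊤ : F.Subgraph).verts.ncard = r := by simp [Set.ncard_univ]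
    rw [hverts, d1, div_mul_cancel₀ _ (by linarith), SimpleGraph.Subgraph.edgeSet_top]
    rfl
  · have := hF S htop hS hpos
    rw [div_lt_iff₀ (by linarith)] at this
    exact this.le

theorem FEdge.IsCopyOf.card_inter_edges_le {r : ℕ} {F : SimpleGraph (Fin r)} {V : Type*}
    [DecidableEq V] {h : FEdge V} (hc : h.IsCopyOf F) (hF : Strictly1Balanced F)
    {W : Finset V} {E' : Finset (Sym2 V)} (hEin : ∀ e ∈ E', ∀ x ∈ e, x ∈ W)
    (hcap : 2 ≤ #(W ∩ h.1)) :
    (#(E' ∩ h.2) : ℝ) ≤ d1 F * ((#(W ∩ h.1) : ℝ) - 1) := by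
  obtain ⟨φ, hφ, hverts, hedges⟩ := hc
  let S : F.Subgraph :=
    { verts := φ ⁻¹' W
      Adj := fun u v => F.Adj u v ∧ s(φ u, φ v) ∈ E'
      adj_sub := And.left
      edge_vert := fun huv => hEin _ huv.2 _ (Sym2.mem_mk_left _ _)
      symm := ⟨fun _ _ huv => ⟨huv.1.symm, Sym2.eq_swap ▸ huv.2⟩⟩ }
  have hS_verts : S.verts.ncard = #(W ∩ h.1) := by
    rw [← Set.ncard_image_of_injective _ hφ, Set.image_preimage_eq_inter_range, ← hverts,
      ← coe_inter, Set.ncard_coe_finset]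
  have hS_edgeSet : S.edgeSet = F.edgeSet ∩ Sym2.map φ ⁻¹' E' := by
    ext e
    induction e using Sym2.ind
    rfl
  have hS_edges : S.edgeSet.ncard = #(E' ∩ h.2) := by
    rw [← Set.ncard_image_of_injective _ (Sym2.map.injective hφ), hS_edgeSet,
      Set.image_inter_preimage, ← hedges, inter_comm, ← coe_inter, Set.ncard_coe_finset]
  simpa only [hS_verts, hS_edges] using hF.card_edgeSet_le S (hS_verts ▸ hcap)

section CleanPath

variable {V : Type*} [DecidableEq V] {ℓ : ℕ} {h : Fin ℓ → FEdge V}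

theorem card_inter_le_one_of_clean_path
    (hconsec : ∀ i j : Fin ℓ, (i : ℕ) + 1 = j → #((h i).1 ∩ (h j).1) = 1)
    (hfar : ∀ i j : Fin ℓ, (i : ℕ) + 2 ≤ j → (h i).1 ∩ (h j).1 = ∅)
    {i j : Fin ℓ} (hij : i ≠ j) : #((h i).1 ∩ (h j).1) ≤ 1 := by
  wlog hlt : i < j generalizing i j
  · rw [inter_comm]
    exact this hij.symm (lt_of_le_of_ne (not_lt.mp hlt) hij.symm)
  obtain hnext | hfar' : (i : ℕ) + 1 = j ∨ (i : ℕ) + 2 ≤ j := by rw [Fin.lt_def] at hlt; omega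
  · exact (hconsec i j hnext).le
  · simp [hfar i j hfar']

theorem card_eq_sum_card_inter_of_clean_path {r : ℕ} {F : SimpleGraph (Fin r)}
    (hcopies : ∀ i, (h i).IsCopyOf F)
    (hconsec : ∀ i j : Fin ℓ, (i : ℕ) + 1 = j → #((h i).1 ∩ (h j).1) = 1)
    (hfar : ∀ i j : Fin ℓ, (i : ℕ) + 2 ≤ j → (h i).1 ∩ (h j).1 = ∅)
    {E' : Finset (Sym2 V)} (hEsub : E' ⊆ univ.sup fun i => (h i).2) :
    #E' = ∑ i, #(E' ∩ (h i).2) := by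
  have hdisj : ∀ i j, i ≠ j → Disjoint (E' ∩ (h i).2) (E' ∩ (h j).2) := fun i j hij =>
    ((hcopies i).disjoint_edges (hcopies j) (card_inter_le_one_of_clean_path hconsec hfar hij)).mono
      inter_subset_right inter_subset_right
  rw [← card_biUnion fun i _ j _ => hdisj i j, ← inter_biUnion, ← sup_eq_biUnion,
    inter_eq_left.mpr hEsub]

theorem card_sub_one_eq_sum_of_clean_path {n : ℕ} {h : Fin (n + 1) → FEdge V}
    (hconsec : ∀ i j : Fin (n + 1), (i : ℕ) + 1 = j → #((h i).1 ∩ (h j).1) = 1)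
    (hfar : ∀ i j : Fin (n + 1), (i : ℕ) + 2 ≤ j → (h i).1 ∩ (h j).1 = ∅)
    {W : Finset V} (hWsub : W ⊆ univ.sup fun i => (h i).1)
    (hov : ∀ i j : Fin (n + 1), (i : ℕ) + 1 = j → (h i).1 ∩ (h j).1 ⊆ W) :
    (#W : ℝ) - 1 = ∑ i, ((#(W ∩ (h i).1) : ℝ) - 1) := by
  have hchain := card_biUnion_add_eq_sum_card_of_chain (fun i => W ∩ (h i).1)
    (fun i j hij => by
      rw [← inter_inter_distrib_left, inter_eq_right.mpr (hov i j hij), hconsec i j hij])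
    (fun i j hij => (disjoint_iff_inter_eq_empty.mpr (hfar i j hij)).mono
      inter_subset_right inter_subset_right)
  rw [← inter_biUnion, ← sup_eq_biUnion, inter_eq_left.mpr hWsub] at hchain
  rw [sum_sub_distrib, ← Nat.cast_sum, ← hchain]
  simp only [Nat.cast_add, sum_const, card_univ, Fintype.card_fin, nsmul_eq_mul, Nat.cast_one,
    mul_one]
  ring

end CleanPath

theorem nonempty_of_connected_induce_fromEdgeSet {V : Type*} {W : Finset V}
    {E' : Finset (Sym2 V)}
    (hconn : ((SimpleGraph.fromEdgeSet (E' : Set (Sym2 V))).induce (W : Set V)).Connected)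
    (hW : 1 < #W) : E'.Nonempty := by
  rw [nonempty_iff_ne_empty]
  rintro rfl
  have : Nontrivial (W : Set V) := (one_lt_card_iff_nontrivial.mp hW).coe_sort
  exact SimpleGraph.not_connected_bot (by simpa using hconn)

theorem clean_path_subgraph_density_general {r : ℕ} (F : SimpleGraph (Fin r))
    (hF : Strictly1Balanced F) {V : Type*} [DecidableEq V]
    (ℓ : ℕ) (hℓ : 1 ≤ ℓ) (h : Fin ℓ → FEdge V)
    (hcopies : ∀ i, FEdge.IsCopyOf (h i) F)
    (hconsec : ∀ i j : Fin ℓ, (i : ℕ) + 1 = (j : ℕ) → ((h i).1 ∩ (h j).1).card = 1)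
    (hfar : ∀ i j : Fin ℓ, (i : ℕ) + 2 ≤ (j : ℕ) → (h i).1 ∩ (h j).1 = ∅)
    (W : Finset V) (E' : Finset (Sym2 V))
    (hWsub : W ⊆ (Finset.univ : Finset (Fin ℓ)).sup fun i => (h i).1)
    (hEsub : E' ⊆ (Finset.univ : Finset (Fin ℓ)).sup fun i => (h i).2)
    (hEin : ∀ e ∈ E', ∀ x ∈ e, x ∈ W)
    (hconn : ((SimpleGraph.fromEdgeSet (↑E' : Set (Sym2 V))).induce (↑W : Set V)).Connected)
    (hW2 : 2 ≤ W.card)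
    (hov : ∀ i j : Fin ℓ, (i : ℕ) + 1 = (j : ℕ) → (h i).1 ∩ (h j).1 ⊆ W)
    (hcap : ∀ i : Fin ℓ, 2 ≤ (W ∩ (h i).1).card) :
    (E'.card : ℝ) / ((W.card : ℝ) - 1)
        = (∑ i : Fin ℓ, ((E' ∩ (h i).2).card : ℝ) / ((W.card : ℝ) - 1)) ∧
    (E'.card : ℝ) / ((W.card : ℝ) - 1) ≤ d1 F ∧
    (E'.card : ℝ) / (W.card : ℝ) < d1 F := by
  obtain ⟨n, rfl⟩ : ∃ n, ℓ = n + 1 := ⟨ℓ - 1, by omega⟩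
  have hW : (1 : ℝ) < #W := by exact_mod_cast hW2
  have hEdges : (#E' : ℝ) = ∑ i, (#(E' ∩ (h i).2) : ℝ) := by
    exact_mod_cast card_eq_sum_card_inter_of_clean_path hcopies hconsec hfar hEsub
  have hle : (#E' : ℝ) / (#W - 1) ≤ d1 F := by
    rw [div_le_iff₀ (by linarith), hEdges,
      card_sub_one_eq_sum_of_clean_path hconsec hfar hWsub hov, mul_sum]
    exact sum_le_sum fun i _ => (hcopies i).card_inter_edges_le hF hEin (hcap i)
  refine ⟨by rw [← sum_div, hEdges], hle, ?_⟩
  have hE_pos : (0 : ℝ) < #E' := by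
    exact_mod_cast (nonempty_of_connected_induce_fromEdgeSet hconn hW2).card_pos
  exact (div_lt_div_of_pos_left hE_pos (by linarith) (by linarith)).trans_le hle

/-- Let `P` be a clean `F`-path with `F`-edges `h 0, …, h (ℓ-1)` and let
`S = (W, E')` be a connected subgraph of the shadow graph of `P` with at least 2 vertices
containing all overlap vertices and meeting every `h i` in at least 2 vertices. Then
`d₁(S) = Σᵢ e(S ∩ hᵢ)/(v(S)-1) ≤ d₁(F)`, and consequently `e(S)/v(S) < d₁(F)`. -/
theorem clean_path_subgraph_density {r : ℕ} (hr : 3 ≤ r) (F : SimpleGraph (Fin r))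
    (hF : Strictly1Balanced F) (hFconn : F.Connected) {V : Type*} [DecidableEq V]
    (ℓ : ℕ) (hℓ : 1 ≤ ℓ) (h : Fin ℓ → FEdge V)
    (hcopies : ∀ i, FEdge.IsCopyOf (h i) F) (hinj : Function.Injective h)
    (hconsec : ∀ i j : Fin ℓ, (i : ℕ) + 1 = (j : ℕ) → ((h i).1 ∩ (h j).1).card = 1)
    (hfar : ∀ i j : Fin ℓ, (i : ℕ) + 2 ≤ (j : ℕ) → (h i).1 ∩ (h j).1 = ∅)
    (W : Finset V) (E' : Finset (Sym2 V))
    (hWsub : W ⊆ (Finset.univ : Finset (Fin ℓ)).sup fun i => (h i).1)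
    (hEsub : E' ⊆ (Finset.univ : Finset (Fin ℓ)).sup fun i => (h i).2)
    (hEin : ∀ e ∈ E', ∀ x ∈ e, x ∈ W)
    (hconn : ((SimpleGraph.fromEdgeSet (↑E' : Set (Sym2 V))).induce (↑W : Set V)).Connected)
    (hW2 : 2 ≤ W.card)
    (hov : ∀ i j : Fin ℓ, (i : ℕ) + 1 = (j : ℕ) → (h i).1 ∩ (h j).1 ⊆ W)
    (hcap : ∀ i : Fin ℓ, 2 ≤ (W ∩ (h i).1).card) :
    (E'.card : ℝ) / ((W.card : ℝ) - 1)
        = (∑ i : Fin ℓ, ((E' ∩ (h i).2).card : ℝ) / ((W.card : ℝ) - 1)) ∧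
    (E'.card : ℝ) / ((W.card : ℝ) - 1) ≤ d1 F ∧
    (E'.card : ℝ) / (W.card : ℝ) < d1 F :=
  clean_path_subgraph_density_general F hF ℓ hℓ h hcopies hconsec hfar W E' hWsub hEsub hEin hconn
    hW2 hov hcap

end
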